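/- arXiv:2208.14216 — 4 statements merged into one kernel-verified Lean document; each statement's English description precedes it below -/
import Mathlib

section
/- Let B be a nondegenerate bilinear form on a 2n-dimensional complex vector space V which is either symmetric or alternating, and suppose V = V₋ ⊕ V₊ with both summands totally isotropic (hence of dimension n). Equip V with the ℂ*-action φ_t acting as t on V₋ and as the identity on V₊. Then for integers 0 ≤ s ≤ k ≤ n, the assignment W ↦ (W ∩ V₋, { v ∈ V₋ : B(v, w) = 0 for all w ∈ W ∩ V₊ }) is a bijection from the set of invariant totally isotropic subspaces W ⊆ V with dim W = k and dim(W ∩ V₊) = s onto the set of flags W' ⊆ A ⊆ V₋ with dim W' = k − s and dim A = n − s; the inverse sends (W', A) to W' ⊕ { w ∈ V₊ : B(v, w) = 0 for all v ∈ A }. (This identifies the fixed-point components of the ℂ*-action on the isotropic Grassmannian of k-planes with two-step flag varieties in V₋.) -/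
/-!
An invariant subspace is graded, `W = (W ⊓ V₋) ⊔ (W ⊓ V₊)`: if `a + b ∈ W` then
`φ_t (a + b) - (a + b) = (t - 1) • a ∈ W`. A symmetric or alternating form is reflexive, so there
is a single orthogonal complement `S^⊥`. For complementary totally isotropic `V₋, V₊` and
`S ≤ V₊` one has `S^⊥ = (V₋ ⊓ S^⊥) ⊔ V₊`, so `V₋ ⊓ S^⊥` has dimension `n - dim S`, and comparing
dimensions gives `V₊ ⊓ (V₋ ⊓ S^⊥)^⊥ = S` (and symmetrically). A graded `W = W₋ ⊔ W₊` is
isotropic exactly when `W₋ ≤ W₊^⊥`, so `W ↦ (W₋, V₋ ⊓ W₊^⊥)` and `(W', A) ↦ W' ⊔ (V₊ ⊓ A^⊥)`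
are mutually inverse.
-/

open Module LinearMap.BilinForm

theorem sup_inf_eq_left_of_disjoint {α : Type*} [Lattice α] [IsModularLattice α] [OrderBot α]
    {a b c d : α} (hac : a ≤ c) (hbd : b ≤ d) (hcd : Disjoint c d) : (a ⊔ b) ⊓ c = a := by
  rw [sup_inf_assoc_of_le b hac, (hcd.symm.mono_left hbd).eq_bot, sup_bot_eq]

theorem sup_inf_eq_right_of_disjoint {α : Type*} [Lattice α] [IsModularLattice α] [OrderBot α]
    {a b c d : α} (hac : a ≤ c) (hbd : b ≤ d) (hcd : Disjoint c d) : (a ⊔ b) ⊓ d = b :=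
  sup_comm b a ▸ sup_inf_eq_left_of_disjoint hbd hac hcd.symm

namespace Submodule

variable {K V : Type*} [DivisionRing K] [AddCommGroup V] [Module K V] {P Q : Submodule K V}

theorem finrank_sup_of_disjoint [FiniteDimensional K V] {s t : Submodule K V}
    (h : Disjoint s t) :
    finrank K ↥(s ⊔ t) = finrank K s + finrank K t := by
  rw [← finrank_sup_add_finrank_inf_eq, h.eq_bot, finrank_bot, add_zero]

theorem eq_inf_sup_inf_of_map_le (hPQ : P ⊔ Q = ⊤) {f : V →ₗ[K] V} {c : K} (hc : c ≠ 1)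
    (hfP : ∀ v ∈ P, f v = c • v) (hfQ : ∀ v ∈ Q, f v = v) {W : Submodule K V}
    (hW : W.map f ≤ W) : W = W ⊓ P ⊔ W ⊓ Q := by
  refine le_antisymm (fun w hw => ?_) (sup_le inf_le_left inf_le_left)
  obtain ⟨a, ha, b, hb, rfl⟩ := mem_sup.mp (hPQ ▸ mem_top : w ∈ P ⊔ Q)
  have hcW : (c - 1) • a ∈ W := by
    have h := W.sub_mem (hW (mem_map_of_mem hw)) hw
    rw [map_add, hfP a ha, hfQ b hb, add_sub_add_right_eq_sub] at h
    rwa [sub_smul, one_smul]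
  have haW : a ∈ W := (W.smul_mem_iff (sub_ne_zero.mpr hc)).mp hcW
  exact mem_sup.mpr ⟨a, ⟨haW, ha⟩, b, ⟨(W.add_mem_iff_right haW).mp hw, hb⟩, rfl⟩

theorem map_le_of_eq_inf_sup_inf {f : V →ₗ[K] V} {c : K} (hfP : ∀ v ∈ P, f v = c • v)
    (hfQ : ∀ v ∈ Q, f v = v) {W : Submodule K V} (hW : W = W ⊓ P ⊔ W ⊓ Q) : W.map f ≤ W := by
  rw [hW, map_sup]
  refine sup_le_sup ?_ ?_ <;> rintro _ ⟨v, hv, rfl⟩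
  · simpa only [hfP v hv.2] using (W ⊓ P).smul_mem c hv
  · rwa [hfQ v hv.2]

theorem forall_map_le_iff_eq_inf_sup_inf (hPQ : P ⊔ Q = ⊤) {φ : Kˣ → V →ₗ[K] V}
    (hφP : ∀ (t : Kˣ) (v : V), v ∈ P → φ t v = (t : K) • v)
    (hφQ : ∀ (t : Kˣ) (v : V), v ∈ Q → φ t v = v) {t₀ : Kˣ} (ht₀ : (t₀ : K) ≠ 1)
    {W : Submodule K V} : (∀ t, W.map (φ t) ≤ W) ↔ W = W ⊓ P ⊔ W ⊓ Q :=
  ⟨fun h => eq_inf_sup_inf_of_map_le hPQ ht₀ (hφP t₀) (hφQ t₀) (h t₀),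
    fun h t => map_le_of_eq_inf_sup_inf (hφP t) (hφQ t) h⟩

def flags (P : Submodule K V) (a b : ℕ) : Set (Submodule K V × Submodule K V) :=
  {p | p.1 ≤ p.2 ∧ p.2 ≤ P ∧ finrank K p.1 = a ∧ finrank K p.2 = b}

end Submodule

namespace LinearMap.BilinForm

section CommRing

variable {R M : Type*} [CommRing R] [AddCommGroup M] [Module R M] {B : LinearMap.BilinForm R M}

theorem iInf_ker_eq_orthogonal (N : Submodule R M) :
    ⨅ v ∈ N, LinearMap.ker (B v) = B.orthogonal N := by
  ext; simp [Submodule.mem_iInf]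

theorem orthogonal_flip (hR : B.IsRefl) (N : Submodule R M) :
    orthogonal (LinearMap.flip B) N = B.orthogonal N := by
  ext; simp [hR.eq_iff]

theorem orthogonal_sup (N L : Submodule R M) :
    B.orthogonal (N ⊔ L) = B.orthogonal N ⊓ B.orthogonal L := by
  refine le_antisymm (le_inf (orthogonal_le le_sup_left) (orthogonal_le le_sup_right)) ?_
  rintro m ⟨hN, hL⟩ x hx
  obtain ⟨a, ha, b, hb, rfl⟩ := Submodule.mem_sup.mp hx
  rw [map_add, LinearMap.add_apply, hN a ha, hL b hb, add_zero]

theorem sup_le_orthogonal_sup (hR : B.IsRefl) {N L : Submodule R M}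
    (hN : N ≤ B.orthogonal N) (hL : L ≤ B.orthogonal L) (hLN : L ≤ B.orthogonal N) :
    N ⊔ L ≤ B.orthogonal (N ⊔ L) := by
  have hNL : N ≤ B.orthogonal L := (le_orthogonal_orthogonal hR).trans (orthogonal_le hLN)
  rw [orthogonal_sup]
  exact sup_le (le_inf hN hNL) (le_inf hLN hL)

theorem le_orthogonal_self_of_le {N L : Submodule R M} (hNL : N ≤ L)
    (hL : L ≤ B.orthogonal L) : N ≤ B.orthogonal N :=
  hNL.trans (hL.trans (orthogonal_le hNL))

end CommRing

variable {K V : Type*} [Field K] [AddCommGroup V] [Module K V]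

structure IsIsotropicSplitting (B : LinearMap.BilinForm K V) (P Q : Submodule K V) : Prop where
  isCompl : IsCompl P Q
  le_orthogonal_left : P ≤ B.orthogonal P
  le_orthogonal_right : Q ≤ B.orthogonal Q

theorem IsIsotropicSplitting.symm {B : LinearMap.BilinForm K V} {P Q : Submodule K V}
    (h : B.IsIsotropicSplitting P Q) : B.IsIsotropicSplitting Q P :=
  ⟨h.isCompl.symm, h.le_orthogonal_right, h.le_orthogonal_left⟩

def gradedIsotropicSubmodules (B : LinearMap.BilinForm K V) (P Q : Submodule K V) (k s : ℕ) :
    Set (Submodule K V) :=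
  {W | W = W ⊓ P ⊔ W ⊓ Q ∧ W ≤ B.orthogonal W ∧ finrank K W = k ∧ finrank K ↥(W ⊓ Q) = s}

def toFlag (B : LinearMap.BilinForm K V) (P Q W : Submodule K V) :
    Submodule K V × Submodule K V :=
  (W ⊓ P, P ⊓ B.orthogonal (W ⊓ Q))

def ofFlag (B : LinearMap.BilinForm K V) (Q : Submodule K V)
    (p : Submodule K V × Submodule K V) : Submodule K V :=
  p.1 ⊔ Q ⊓ B.orthogonal p.2

theorem setOf_invariant_isotropic_eq {B : LinearMap.BilinForm K V} {P Q : Submodule K V}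
    (hPQ : P ⊔ Q = ⊤) {φ : Kˣ → V →ₗ[K] V}
    (hφP : ∀ (t : Kˣ) (v : V), v ∈ P → φ t v = (t : K) • v)
    (hφQ : ∀ (t : Kˣ) (v : V), v ∈ Q → φ t v = v) {t₀ : Kˣ} (ht₀ : (t₀ : K) ≠ 1) (k s : ℕ) :
    {W : Submodule K V | (∀ t : Kˣ, W.map (φ t) ≤ W) ∧ (∀ u ∈ W, ∀ u' ∈ W, B u u' = 0) ∧
      finrank K W = k ∧ finrank K (W ⊓ Q : Submodule K V) = s} =
      gradedIsotropicSubmodules B P Q k s :=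
  Set.ext fun _ => and_congr (Submodule.forall_map_le_iff_eq_inf_sup_inf hPQ hφP hφQ ht₀)
    (and_congr ⟨fun h _ hu' u hu => h u hu _ hu', fun h u hu _ hu' => h hu' u hu⟩ Iff.rfl)

end LinearMap.BilinForm

namespace LinearMap.BilinForm.IsIsotropicSplitting

variable {K V : Type*} [Field K] [AddCommGroup V] [Module K V] [FiniteDimensional K V]
  {B : LinearMap.BilinForm K V} {P Q : Submodule K V}

theorem finrank_eq (h : B.IsIsotropicSplitting P Q) (hN : B.Nondegenerate) :
    finrank K P = finrank K Q := by
  have hP := Submodule.finrank_mono h.le_orthogonal_left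
  have hQ := Submodule.finrank_mono h.le_orthogonal_right
  rw [finrank_orthogonal hN] at hP hQ
  have := Submodule.finrank_add_eq_of_isCompl h.isCompl
  omega

theorem finrank_inf_orthogonal_add_finrank (h : B.IsIsotropicSplitting P Q)
    (hN : B.Nondegenerate) {S : Submodule K V} (hS : S ≤ Q) :
    finrank K ↥(P ⊓ B.orthogonal S) + finrank K S = finrank K P := by
  have hQS : Q ≤ B.orthogonal S := h.le_orthogonal_right.trans (orthogonal_le hS)
  have hsplit : P ⊓ B.orthogonal S ⊔ Q = B.orthogonal S := by
    rw [inf_comm, inf_sup_assoc_of_le _ hQS, h.isCompl.sup_eq_top, inf_top_eq]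
  have hdim := finrank_orthogonal hN S
  rw [← hsplit, Submodule.finrank_sup_of_disjoint (h.isCompl.disjoint.mono_left inf_le_left)]
    at hdim
  have := Submodule.finrank_add_eq_of_isCompl h.isCompl
  have := h.finrank_eq hN
  have := Submodule.finrank_le S
  omega

theorem inf_orthogonal_inf_orthogonal (h : B.IsIsotropicSplitting P Q) (hR : B.IsRefl)
    (hN : B.Nondegenerate) {S : Submodule K V} (hS : S ≤ Q) :
    Q ⊓ B.orthogonal (P ⊓ B.orthogonal S) = S := by
  have hSS : S ≤ B.orthogonal (P ⊓ B.orthogonal S) :=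
    (le_orthogonal_orthogonal hR).trans
      (orthogonal_le (inf_le_right : P ⊓ B.orthogonal S ≤ B.orthogonal S))
  refine (Submodule.eq_of_le_of_finrank_le (le_inf hS hSS) ?_).symm
  have := h.symm.finrank_inf_orthogonal_add_finrank hN
    (inf_le_left : P ⊓ B.orthogonal S ≤ P)
  have := h.finrank_inf_orthogonal_add_finrank hN hS
  have := h.finrank_eq hN
  omega

theorem mapsTo_toFlag (h : B.IsIsotropicSplitting P Q) (hN : B.Nondegenerate) {k s : ℕ} :
    Set.MapsTo (toFlag B P Q) (gradedIsotropicSubmodules B P Q k s)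
      (P.flags (k - s) (finrank K P - s)) := by
  rintro W ⟨hW, hWW, rfl, rfl⟩
  have hWP : W ⊓ P ≤ B.orthogonal (W ⊓ Q) :=
    inf_le_left.trans (hWW.trans (orthogonal_le inf_le_left))
  have hdim : finrank K W = finrank K ↥(W ⊓ P) + finrank K ↥(W ⊓ Q) := by
    conv_lhs => rw [hW]
    exact Submodule.finrank_sup_of_disjoint (h.isCompl.disjoint.mono inf_le_right inf_le_right)
  exact ⟨le_inf inf_le_right hWP, inf_le_left, eq_tsub_of_add_eq hdim.symm,
    eq_tsub_of_add_eq (h.finrank_inf_orthogonal_add_finrank hN inf_le_right)⟩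

theorem mapsTo_ofFlag (h : B.IsIsotropicSplitting P Q) (hR : B.IsRefl) (hN : B.Nondegenerate)
    {k s : ℕ} (hsk : s ≤ k) (hsP : s ≤ finrank K P) :
    Set.MapsTo (ofFlag B Q) (P.flags (k - s) (finrank K P - s))
      (gradedIsotropicSubmodules B P Q k s) := by
  rintro ⟨W', A⟩ ⟨hW'A, hAP, hW', hA⟩
  dsimp only [ofFlag] at hW'A hAP hW' hA ⊢
  have hW'P : W' ≤ P := hW'A.trans hAP
  have hSQ : Q ⊓ B.orthogonal A ≤ Q := inf_le_left
  have hS : finrank K ↥(Q ⊓ B.orthogonal A) = s := by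
    have := h.symm.finrank_inf_orthogonal_add_finrank hN hAP
    rw [← h.finrank_eq hN, hA] at this
    omega
  have hiso : W' ⊔ Q ⊓ B.orthogonal A ≤ B.orthogonal (W' ⊔ Q ⊓ B.orthogonal A) :=
    sup_le_orthogonal_sup hR (le_orthogonal_self_of_le hW'P h.le_orthogonal_left)
      (le_orthogonal_self_of_le hSQ h.le_orthogonal_right) (inf_le_right.trans (orthogonal_le hW'A))
  have hdisj := h.isCompl.disjoint
  refine ⟨?_, hiso, ?_, ?_⟩
  · rw [sup_inf_eq_left_of_disjoint hW'P hSQ hdisj, sup_inf_eq_right_of_disjoint hW'P hSQ hdisj]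
  · rw [Submodule.finrank_sup_of_disjoint (hdisj.mono hW'P hSQ), hW', hS]
    omega
  · rw [sup_inf_eq_right_of_disjoint hW'P hSQ hdisj, hS]

theorem leftInvOn_ofFlag_toFlag (h : B.IsIsotropicSplitting P Q) (hR : B.IsRefl)
    (hN : B.Nondegenerate) {k s : ℕ} :
    Set.LeftInvOn (ofFlag B Q) (toFlag B P Q) (gradedIsotropicSubmodules B P Q k s) := by
  rintro W ⟨hW, -, -, -⟩
  dsimp only [toFlag, ofFlag]
  rw [h.inf_orthogonal_inf_orthogonal hR hN inf_le_right, ← hW]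

theorem rightInvOn_ofFlag_toFlag (h : B.IsIsotropicSplitting P Q) (hR : B.IsRefl)
    (hN : B.Nondegenerate) {a b : ℕ} :
    Set.RightInvOn (ofFlag B Q) (toFlag B P Q) (P.flags a b) := by
  rintro ⟨W', A⟩ ⟨hW'A, hAP, -, -⟩
  have hW'P : W' ≤ P := hW'A.trans hAP
  have hSQ : Q ⊓ B.orthogonal A ≤ Q := inf_le_left
  have hdisj := h.isCompl.disjoint
  dsimp only [toFlag, ofFlag]
  rw [sup_inf_eq_left_of_disjoint hW'P hSQ hdisj, sup_inf_eq_right_of_disjoint hW'P hSQ hdisj,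
    h.symm.inf_orthogonal_inf_orthogonal hR hN hAP]

end LinearMap.BilinForm.IsIsotropicSplitting

/-- Let `B` be a nondegenerate symmetric or alternating bilinear form on a
`2n`-dimensional complex vector space `V`, with `V = V₋ ⊕ V₊`, both summands totally
isotropic. Equip `V` with the `ℂ*`-action `φ t` acting as `t` on `V₋` and as the identity on
`V₊`. For `0 ≤ s ≤ k ≤ n`, the map
`W ↦ (W ∩ V₋, { v ∈ V₋ : B(v,w) = 0 ∀ w ∈ W ∩ V₊ })` is a bijection from the set of
invariant totally isotropic subspaces `W` with `dim W = k`, `dim (W ∩ V₊) = s` onto the set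
of flags `W' ⊆ A ⊆ V₋` with `dim W' = k - s`, `dim A = n - s`; the inverse sends `(W', A)` to
`W' ⊕ { w ∈ V₊ : B(v,w) = 0 ∀ v ∈ A }`. -/
theorem stmt_5 {V : Type*} [AddCommGroup V] [Module ℂ V] [FiniteDimensional ℂ V]
    (n : ℕ) (hdim : Module.finrank ℂ V = 2 * n)
    (B : V →ₗ[ℂ] V →ₗ[ℂ] ℂ)
    (hB : ∀ v : V, (∀ w : V, B v w = 0) → v = 0)
    (hBsa : (∀ x y, B x y = B y x) ∨ (∀ x, B x x = 0))
    (Vm Vp : Submodule ℂ V) (hV : IsCompl Vm Vp)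
    (hm : ∀ u ∈ Vm, ∀ u' ∈ Vm, B u u' = 0)
    (hp : ∀ u ∈ Vp, ∀ u' ∈ Vp, B u u' = 0)
    (φ : ℂˣ → V →ₗ[ℂ] V)
    (hφm : ∀ (t : ℂˣ) (v : V), v ∈ Vm → φ t v = (t : ℂ) • v)
    (hφp : ∀ (t : ℂˣ) (v : V), v ∈ Vp → φ t v = v)
    (k s : ℕ) (hs : s ≤ k) (hk : k ≤ n) :
    Set.BijOn
      (fun W : Submodule ℂ V =>
        (W ⊓ Vm, Vm ⊓ ⨅ w ∈ W ⊓ Vp, LinearMap.ker (B.flip w)))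
      {W : Submodule ℂ V | (∀ t : ℂˣ, W.map (φ t) ≤ W) ∧
        (∀ u ∈ W, ∀ u' ∈ W, B u u' = 0) ∧
        Module.finrank ℂ W = k ∧ Module.finrank ℂ (W ⊓ Vp : Submodule ℂ V) = s}
      {p : Submodule ℂ V × Submodule ℂ V | p.1 ≤ p.2 ∧ p.2 ≤ Vm ∧
        Module.finrank ℂ p.1 = k - s ∧ Module.finrank ℂ p.2 = n - s} ∧
    Set.InvOn
      (fun p : Submodule ℂ V × Submodule ℂ V =>
        p.1 ⊔ (Vp ⊓ ⨅ v ∈ p.2, LinearMap.ker (B v)))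
      (fun W : Submodule ℂ V =>
        (W ⊓ Vm, Vm ⊓ ⨅ w ∈ W ⊓ Vp, LinearMap.ker (B.flip w)))
      {W : Submodule ℂ V | (∀ t : ℂˣ, W.map (φ t) ≤ W) ∧
        (∀ u ∈ W, ∀ u' ∈ W, B u u' = 0) ∧
        Module.finrank ℂ W = k ∧ Module.finrank ℂ (W ⊓ Vp : Submodule ℂ V) = s}
      {p : Submodule ℂ V × Submodule ℂ V | p.1 ≤ p.2 ∧ p.2 ≤ Vm ∧
        Module.finrank ℂ p.1 = k - s ∧ Module.finrank ℂ p.2 = n - s} := by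
  have hR : B.IsRefl :=
    hBsa.elim (fun h => (LinearMap.isSymm_def.mpr h).isRefl) LinearMap.IsAlt.isRefl
  have hN : B.Nondegenerate := hR.nondegenerate_iff_separatingLeft.mpr hB
  have h : IsIsotropicSplitting B Vm Vp :=
    ⟨hV, fun _ hu' u hu => hm u hu _ hu', fun _ hu' u hu => hp u hu _ hu'⟩
  obtain rfl : Module.finrank ℂ Vm = n := by
    have := h.finrank_eq hN
    have := Submodule.finrank_add_eq_of_isCompl hV
    omega
  rw [setOf_invariant_isotropic_eq hV.sup_eq_top hφm hφp (t₀ := Units.mk0 2 two_ne_zero)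
    (by norm_num)]
  simp only [iInf_ker_eq_orthogonal, orthogonal_flip hR]
  have hinv : Set.InvOn (ofFlag B Vp) (toFlag B Vm Vp) (gradedIsotropicSubmodules B Vm Vp k s)
      (Vm.flags (k - s) (Module.finrank ℂ Vm - s)) :=
    ⟨h.leftInvOn_ofFlag_toFlag hR hN, h.rightInvOn_ofFlag_toFlag hR hN⟩
  exact ⟨hinv.bijOn (h.mapsTo_toFlag hN) (h.mapsTo_ofFlag hR hN hs (hs.trans hk)), hinv⟩
end

section
/- Let B be a nondegenerate bilinear form on a 2n-dimensional complex vector space V which is either symmetric or alternating, and suppose V = V₋ ⊕ V₊ with both summands totally isotropic (hence of dimension n). Equip V with the ℂ*-action φ_t acting as t on V₋ and as the identity on V₊. Then the assignment W ↦ W ∩ V₋ is a bijection from the set of invariant totally isotropic subspaces W ⊆ V of dimension n onto the set of all linear subspaces of V₋; its inverse sends a subspace W₋ ⊆ V₋ to W₋ ⊕ { w ∈ V₊ : B(v, w) = 0 for all v ∈ W₋ }. (This identifies the fixed-point components of the ℂ*-action on the Lagrangian, respectively maximal orthogonal, Grassmannian with the Grassmannians of subspaces of V₋.) -/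
/-- Let `B` be a nondegenerate symmetric or alternating bilinear form on a
`2n`-dimensional complex vector space `V`, with `V = V₋ ⊕ V₊`, both summands totally
isotropic. Equip `V` with the `ℂ*`-action `φ t` acting as `t` on `V₋` and as the identity on
`V₊`. Then `W ↦ W ∩ V₋` is a bijection from the set of invariant totally isotropic
subspaces `W ⊆ V` of dimension `n` onto the set of all linear subspaces of `V₋`; its inverse
sends `W₋ ⊆ V₋` to `W₋ ⊕ { w ∈ V₊ : B(v,w) = 0 ∀ v ∈ W₋ }`. -/
theorem stmt_6 {V : Type*} [AddCommGroup V] [Module ℂ V] [FiniteDimensional ℂ V]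
    (n : ℕ) (hdim : Module.finrank ℂ V = 2 * n)
    (B : V →ₗ[ℂ] V →ₗ[ℂ] ℂ)
    (hB : ∀ v : V, (∀ w : V, B v w = 0) → v = 0)
    (hBsa : (∀ x y, B x y = B y x) ∨ (∀ x, B x x = 0))
    (Vm Vp : Submodule ℂ V) (hV : IsCompl Vm Vp)
    (hm : ∀ u ∈ Vm, ∀ u' ∈ Vm, B u u' = 0)
    (hp : ∀ u ∈ Vp, ∀ u' ∈ Vp, B u u' = 0)
    (φ : ℂˣ → V →ₗ[ℂ] V)
    (hφm : ∀ (t : ℂˣ) (v : V), v ∈ Vm → φ t v = (t : ℂ) • v)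
    (hφp : ∀ (t : ℂˣ) (v : V), v ∈ Vp → φ t v = v) :
    Set.BijOn (fun W : Submodule ℂ V => W ⊓ Vm)
      {W : Submodule ℂ V | (∀ t : ℂˣ, W.map (φ t) ≤ W) ∧
        (∀ u ∈ W, ∀ u' ∈ W, B u u' = 0) ∧ Module.finrank ℂ W = n}
      {Wm : Submodule ℂ V | Wm ≤ Vm} ∧
    Set.InvOn
      (fun Wm : Submodule ℂ V => Wm ⊔ (Vp ⊓ ⨅ v ∈ Wm, LinearMap.ker (B v)))
      (fun W : Submodule ℂ V => W ⊓ Vm)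
      {W : Submodule ℂ V | (∀ t : ℂˣ, W.map (φ t) ≤ W) ∧
        (∀ u ∈ W, ∀ u' ∈ W, B u u' = 0) ∧ Module.finrank ℂ W = n}
      {Wm : Submodule ℂ V | Wm ≤ Vm} := by
  classical
  -- swap lemma: vanishing of B is symmetric
  have hswap : ∀ x y : V, B x y = 0 → B y x = 0 := by
    rcases hBsa with hs | ha
    · intro x y h; rw [hs]; exact h
    · intro x y h
      have h2 := ha (x + y)
      simp only [map_add, LinearMap.add_apply] at h2
      rw [ha x, ha y] at h2
      linear_combination h2 - h
  -- right nondegeneracy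
  have hB' : ∀ w : V, (∀ v : V, B v w = 0) → w = 0 := by
    intro w hw
    exact hB w fun u => hswap u w (hw u)
  -- decomposition
  have hdecomp : ∀ v : V, ∃ a ∈ Vm, ∃ b ∈ Vp, v = a + b := by
    intro v
    have hv : v ∈ Vm ⊔ Vp := by rw [hV.sup_eq_top]; trivial
    rcases Submodule.mem_sup.mp hv with ⟨a, ha, b, hb, hab⟩
    exact ⟨a, ha, b, hb, hab.symm⟩
  -- the pairing maps
  set pm : Vp →ₗ[ℂ] Module.Dual ℂ Vm :=
    Vm.subtype.dualMap ∘ₗ (B.flip.domRestrict Vp) with hpm_def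
  have hpm_apply : ∀ (w : Vp) (v : Vm), pm w v = B (v : V) (w : V) := fun _ _ => rfl
  set qm : Vm →ₗ[ℂ] Module.Dual ℂ Vp :=
    Vp.subtype.dualMap ∘ₗ (B.domRestrict Vm) with hqm_def
  have hqm_apply : ∀ (v : Vm) (w : Vp), qm v w = B (v : V) (w : V) := fun _ _ => rfl
  have hpm_inj : Function.Injective pm := by
    rw [← LinearMap.ker_eq_bot, eq_bot_iff]
    rintro w hw
    simp only [LinearMap.mem_ker] at hw
    have hall : ∀ v : V, B v (w : V) = 0 := by
      intro v
      rcases hdecomp v with ⟨a, ha, b, hb, rfl⟩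
      have h1 : B a (w : V) = 0 := by
        have := LinearMap.congr_fun hw ⟨a, ha⟩
        simpa [hpm_apply] using this
      have h2 : B b (w : V) = 0 := hp b hb w w.2
      simp [map_add, LinearMap.add_apply, h1, h2]
    have : (w : V) = 0 := hB' w hall
    simpa [Submodule.mem_bot] using Subtype.ext this
  have hqm_inj : Function.Injective qm := by
    rw [← LinearMap.ker_eq_bot, eq_bot_iff]
    rintro v hv
    simp only [LinearMap.mem_ker] at hv
    have hall : ∀ u : V, B (v : V) u = 0 := by
      intro u
      rcases hdecomp u with ⟨a, ha, b, hb, rfl⟩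
      have h1 : B (v : V) a = 0 := hm v v.2 a ha
      have h2 : B (v : V) b = 0 := by
        have := LinearMap.congr_fun hv ⟨b, hb⟩
        simpa [hqm_apply] using this
      simp [map_add, h1, h2]
    have : (v : V) = 0 := hB v hall
    simpa [Submodule.mem_bot] using Subtype.ext this
  -- dimensions
  have hle1 : Module.finrank ℂ Vm ≤ Module.finrank ℂ Vp := by
    have := LinearMap.finrank_le_finrank_of_injective hqm_inj
    rwa [Subspace.dual_finrank_eq] at this
  have hle2 : Module.finrank ℂ Vp ≤ Module.finrank ℂ Vm := by
    have := LinearMap.finrank_le_finrank_of_injective hpm_inj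
    rwa [Subspace.dual_finrank_eq] at this
  have hsum := Submodule.finrank_add_eq_of_isCompl hV
  rw [hdim] at hsum
  have hVm : Module.finrank ℂ Vm = n := by omega
  have hVp : Module.finrank ℂ Vp = n := by omega
  have hpm_surj : Function.Surjective pm := by
    have heq : Module.finrank ℂ Vp = Module.finrank ℂ (Module.Dual ℂ Vm) := by
      rw [Subspace.dual_finrank_eq, hVm, hVp]
    exact (LinearMap.injective_iff_surjective_of_finrank_eq_finrank heq).mp hpm_inj
  -- key dimension count for the inverse map
  have hfr : ∀ Wm : Submodule ℂ V, Wm ≤ Vm →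
      Module.finrank ℂ Wm +
        Module.finrank ℂ (Vp ⊓ ⨅ v ∈ Wm, LinearMap.ker (B v) : Submodule ℂ V) = n := by
    intro Wm hle
    have hKp : (Vp ⊓ ⨅ v ∈ Wm, LinearMap.ker (B v) : Submodule ℂ V) ≤ Vp := inf_le_left
    set F : Vp →ₗ[ℂ] Module.Dual ℂ Wm :=
      (Submodule.inclusion hle).dualMap ∘ₗ pm with hFdef
    have hFsurj : Function.Surjective F :=
      (LinearMap.dualMap_surjective_of_injective (Submodule.inclusion_injective hle)).comp
        hpm_surj
    have hker : LinearMap.ker F =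
        Submodule.comap Vp.subtype (Vp ⊓ ⨅ v ∈ Wm, LinearMap.ker (B v)) := by
      ext w
      simp only [LinearMap.mem_ker, Submodule.mem_comap, Submodule.mem_inf,
        Submodule.mem_iInf, LinearMap.mem_ker]
      constructor
      · intro h
        refine ⟨w.2, fun v hv => ?_⟩
        exact LinearMap.congr_fun h ⟨v, hv⟩
      · rintro ⟨-, h⟩
        ext ⟨v, hv⟩
        exact h v hv
    have hrk := LinearMap.finrank_range_add_finrank_ker F
    rw [LinearMap.range_eq_top.mpr hFsurj, finrank_top, Subspace.dual_finrank_eq, hker,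
      hVp] at hrk
    have hEq : Module.finrank ℂ
        (Submodule.comap Vp.subtype (Vp ⊓ ⨅ v ∈ Wm, LinearMap.ker (B v))) =
        Module.finrank ℂ (Vp ⊓ ⨅ v ∈ Wm, LinearMap.ker (B v) : Submodule ℂ V) :=
      (Submodule.comapSubtypeEquivOfLe hKp).finrank_eq
    rw [hEq] at hrk
    exact hrk
  -- the sup has dimension n
  have hfrsup : ∀ Wm : Submodule ℂ V, Wm ≤ Vm →
      Module.finrank ℂ (Wm ⊔ (Vp ⊓ ⨅ v ∈ Wm, LinearMap.ker (B v)) : Submodule ℂ V) = n := by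
    intro Wm hle
    have hinf : Wm ⊓ (Vp ⊓ ⨅ v ∈ Wm, LinearMap.ker (B v)) = ⊥ := by
      rw [eq_bot_iff]
      intro x hx
      have hxm : x ∈ Vm := hle hx.1
      have hxp : x ∈ Vp := hx.2.1
      have : x ∈ Vm ⊓ Vp := ⟨hxm, hxp⟩
      rwa [hV.disjoint.eq_bot] at this
    have hs2 := Submodule.finrank_sup_add_finrank_inf_eq Wm
      (Vp ⊓ ⨅ v ∈ Wm, LinearMap.ker (B v))
    rw [hinf, finrank_bot, add_zero, hfr Wm hle] at hs2
    exact hs2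
  -- the inverse map lands in S
  have hgS : ∀ Wm : Submodule ℂ V, Wm ≤ Vm →
      (Wm ⊔ (Vp ⊓ ⨅ v ∈ Wm, LinearMap.ker (B v)) : Submodule ℂ V) ∈
        {W : Submodule ℂ V | (∀ t : ℂˣ, W.map (φ t) ≤ W) ∧
          (∀ u ∈ W, ∀ u' ∈ W, B u u' = 0) ∧ Module.finrank ℂ W = n} := by
    intro Wm hle
    have hKvals : ∀ x ∈ Wm,
        ∀ y ∈ (Vp ⊓ ⨅ v ∈ Wm, LinearMap.ker (B v) : Submodule ℂ V), B x y = 0 := by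
      intro x hx y hy
      obtain ⟨-, h2⟩ := Submodule.mem_inf.mp hy
      rw [Submodule.mem_iInf] at h2
      have h3 := h2 x
      rw [Submodule.mem_iInf] at h3
      exact h3 hx
    refine ⟨?_, ?_, hfrsup Wm hle⟩
    · intro t
      rw [Submodule.map_sup]
      apply sup_le
      · rintro x ⟨y, hy, rfl⟩
        have : φ t y = (t : ℂ) • y := hφm t y (hle hy)
        rw [this]
        exact Submodule.mem_sup_left (Wm.smul_mem _ hy)
      · rintro x ⟨y, hy, rfl⟩
        have : φ t y = y := hφp t y hy.1
        rw [this]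
        exact Submodule.mem_sup_right hy
    · intro u hu u' hu'
      rcases Submodule.mem_sup.mp hu with ⟨a, ha, b, hb, rfl⟩
      rcases Submodule.mem_sup.mp hu' with ⟨a', ha', b', hb', rfl⟩
      have h1 : B a a' = 0 := hm a (hle ha) a' (hle ha')
      have h2 : B a b' = 0 := hKvals a ha b' hb'
      have h3 : B b a' = 0 := hswap a' b (hKvals a' ha' b hb)
      have h4 : B b b' = 0 := hp b hb.1 b' hb'.1
      simp [map_add, LinearMap.add_apply, h1, h2, h3, h4]
  -- right inverse
  have hRight : ∀ Wm : Submodule ℂ V, Wm ≤ Vm →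
      ((Wm ⊔ (Vp ⊓ ⨅ v ∈ Wm, LinearMap.ker (B v))) ⊓ Vm : Submodule ℂ V) = Wm := by
    intro Wm hle
    apply le_antisymm
    · rintro x ⟨hsup, hxVm⟩
      rcases Submodule.mem_sup.mp hsup with ⟨a, ha, b, hb, rfl⟩
      have hbp : b ∈ Vp := hb.1
      have hbm : b ∈ Vm := by
        have : (a + b) - a ∈ Vm := Vm.sub_mem hxVm (hle ha)
        rwa [add_sub_cancel_left] at this
      have hb0 : b = 0 := by
        have : b ∈ Vm ⊓ Vp := ⟨hbm, hbp⟩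
        rwa [hV.disjoint.eq_bot, Submodule.mem_bot] at this
      rw [hb0, add_zero]
      exact ha
    · exact le_inf le_sup_left hle
  -- left inverse
  have hLeft : ∀ W : Submodule ℂ V,
      W ∈ {W : Submodule ℂ V | (∀ t : ℂˣ, W.map (φ t) ≤ W) ∧
        (∀ u ∈ W, ∀ u' ∈ W, B u u' = 0) ∧ Module.finrank ℂ W = n} →
      ((W ⊓ Vm) ⊔ (Vp ⊓ ⨅ v ∈ W ⊓ Vm, LinearMap.ker (B v)) : Submodule ℂ V) = W := by
    rintro W ⟨hinv, hiso, hdimW⟩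
    have hle : W ⊓ Vm ≤ Vm := inf_le_right
    have hWle : W ≤ (W ⊓ Vm) ⊔ (Vp ⊓ ⨅ v ∈ W ⊓ Vm, LinearMap.ker (B v)) := by
      intro w hw
      rcases hdecomp w with ⟨a, ha, b, hb, rfl⟩
      set t : ℂˣ := Units.mk0 (2 : ℂ) two_ne_zero with ht
      have hφw : φ t (a + b) ∈ W := hinv t ⟨a + b, hw, rfl⟩
      have hcalc : φ t (a + b) = (2 : ℂ) • a + b := by
        rw [map_add, hφm t a ha, hφp t b hb]
        norm_num [ht]
      have haW : a ∈ W := by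
        have hsub : φ t (a + b) - (a + b) ∈ W := W.sub_mem hφw hw
        have heq : φ t (a + b) - (a + b) = a := by
          rw [hcalc]; module
        rwa [heq] at hsub
      have hbW : b ∈ W := by
        have := W.sub_mem hw haW
        rwa [add_sub_cancel_left] at this
      apply Submodule.add_mem_sup (S := W ⊓ Vm)
        (T := Vp ⊓ ⨅ v ∈ W ⊓ Vm, LinearMap.ker (B v))
      · exact ⟨haW, ha⟩
      · rw [Submodule.mem_inf]
        refine ⟨hb, ?_⟩
        rw [Submodule.mem_iInf]
        intro v
        rw [Submodule.mem_iInf]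
        intro hv
        exact hiso v hv.1 b hbW
    have hfin : Module.finrank ℂ
        ((W ⊓ Vm) ⊔ (Vp ⊓ ⨅ v ∈ W ⊓ Vm, LinearMap.ker (B v)) : Submodule ℂ V) = n :=
      hfrsup (W ⊓ Vm) hle
    exact (Submodule.eq_of_le_of_finrank_eq hWle (by rw [hdimW, hfin])).symm
  have hInv : Set.InvOn
      (fun Wm : Submodule ℂ V => Wm ⊔ (Vp ⊓ ⨅ v ∈ Wm, LinearMap.ker (B v)))
      (fun W : Submodule ℂ V => W ⊓ Vm)
      {W : Submodule ℂ V | (∀ t : ℂˣ, W.map (φ t) ≤ W) ∧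
        (∀ u ∈ W, ∀ u' ∈ W, B u u' = 0) ∧ Module.finrank ℂ W = n}
      {Wm : Submodule ℂ V | Wm ≤ Vm} := by
    constructor
    · intro W hW
      exact hLeft W hW
    · intro Wm hWm
      exact hRight Wm hWm
  refine ⟨hInv.bijOn ?_ ?_, hInv⟩
  · intro W _
    simp only [Set.mem_setOf_eq]
    exact inf_le_right
  · intro Wm hWm
    exact hgS Wm hWm
end

section
/- For every integer k ≥ 1, the assignment W ↦ W ∩ V₀ is a bijection from the set of invariant totally isotropic subspaces W ⊆ V with dim W = k and V₋ ⊆ W onto the set of totally isotropic subspaces of V₀ of dimension k − 1; its inverse is W₀ ↦ V₋ ⊕ W₀. (This identifies the sink of the ℂ*-action on the orthogonal Grassmannian of isotropic k-planes of V with the orthogonal Grassmannian of isotropic (k−1)-planes of V₀.) -/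
/-!
An invariant subspace contains each weight component of each of its vectors. If `W` is totally
isotropic and contains `V₋`, its `V₊`-components vanish, because `B` pairs the line `V₋`
nontrivially with the line `V₊`; so `V₋ ≤ W ≤ V₋ ⊕ V₀`, and the modular law gives
`W = V₋ ⊕ (W ∩ V₀)`, with `dim (W ∩ V₀) = k - 1`. Conversely, for totally isotropic
`W₀ ≤ V₀` the subspace `V₋ ⊕ W₀` is invariant, and it is totally isotropic because `B`
vanishes on `V₋ × V₋` and between `V₋` and `V₀`.
-/

open Module

section

variable {K V : Type*} [Field K] [AddCommGroup V] [Module K V]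

def IsTotallyIsotropic (B : V →ₗ[K] V →ₗ[K] K) (W : Submodule K V) : Prop :=
  ∀ u ∈ W, ∀ u' ∈ W, B u u' = 0

theorem IsTotallyIsotropic.mono {B : V →ₗ[K] V →ₗ[K] K} {U W : Submodule K V}
    (hW : IsTotallyIsotropic B W) (hUW : U ≤ W) : IsTotallyIsotropic B U :=
  fun u hu u' hu' => hW u (hUW hu) u' (hUW hu')

theorem isTotallyIsotropic_sup {B : V →ₗ[K] V →ₗ[K] K} {P Q : Submodule K V}
    (hP : IsTotallyIsotropic B P) (hQ : IsTotallyIsotropic B Q)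
    (hPQ : ∀ p ∈ P, ∀ q ∈ Q, B p q = 0 ∧ B q p = 0) : IsTotallyIsotropic B (P ⊔ Q) := by
  intro u hu u' hu'
  obtain ⟨p, hp, q, hq, rfl⟩ := Submodule.mem_sup.mp hu
  obtain ⟨p', hp', q', hq', rfl⟩ := Submodule.mem_sup.mp hu'
  simp only [map_add, LinearMap.add_apply, hP p hp p' hp', hQ q hq q' hq',
    (hPQ p hp q' hq').1, (hPQ p' hp' q hq).2, add_zero]

theorem eq_zero_of_mem_of_finrank_eq_one {L : Submodule K V} (hL : finrank K L = 1)
    (f : V →ₗ[K] K) {w c : V} (hw : w ∈ L) (hfw : f w ≠ 0) (hc : c ∈ L) (hfc : f c = 0) :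
    c = 0 := by
  have hw0 : (⟨w, hw⟩ : L) ≠ 0 := fun h =>
    hfw (by rw [show w = 0 from congrArg Subtype.val h, map_zero])
  obtain ⟨μ, hμ⟩ := (finrank_eq_one_iff_of_nonzero' _ hw0).mp hL ⟨c, hc⟩
  have hcw : c = μ • w := (congrArg Subtype.val hμ).symm
  rw [hcw, map_smul, smul_eq_mul, mul_eq_zero] at hfc
  rw [hcw, hfc.resolve_right hfw, zero_smul]

theorem Submodule.finrank_sup_eq_of_disjoint [FiniteDimensional K V] {P Q : Submodule K V}
    (h : Disjoint P Q) : finrank K ↥(P ⊔ Q) = finrank K P + finrank K Q := by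
  rw [← Submodule.finrank_sup_add_finrank_inf_eq, h.eq_bot, finrank_bot, add_zero]

/-- The `t`-, `1`- and `t⁻¹`-components of a vector can be separated by taking `t = 1, 2, 4`. -/
theorem mem_of_forall_units_smul_add_add_inv_smul_mem [CharZero K] {W : Submodule K V}
    {a b c : V} (h : ∀ t : Kˣ, (t : K) • a + b + (t : K)⁻¹ • c ∈ W) : c ∈ W := by
  have h1 := h 1
  have h2 := h (Units.mk0 2 two_ne_zero)
  have h4 := h (Units.mk0 4 (by norm_num))
  simp only [Units.val_one, one_smul, inv_one, Units.val_mk0] at h1 h2 h4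
  have hc : c = (8 / 3 : K) • (a + b + c) - (4 : K) • ((2 : K) • a + b + (2 : K)⁻¹ • c)
      + (4 / 3 : K) • ((4 : K) • a + b + (4 : K)⁻¹ • c) := by
    match_scalars <;> field_simp <;> norm_num
  rw [hc]
  exact W.add_mem (W.sub_mem (W.smul_mem _ h1) (W.smul_mem _ h2)) (W.smul_mem _ h4)

variable (B : V →ₗ[K] V →ₗ[K] K) {Vm V0 Vp : Submodule K V} (φ : Kˣ → V →ₗ[K] V)

theorem inf_eq_bot_of_isTotallyIsotropic (hp1 : finrank K Vp = 1)
    (hnz : ∃ u ∈ Vm, ∃ w ∈ Vp, B u w ≠ 0) {W : Submodule K V}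
    (hiso : IsTotallyIsotropic B W) (hVm : Vm ≤ W) : W ⊓ Vp = ⊥ := by
  obtain ⟨u, hu, w, hw, huw⟩ := hnz
  refine eq_bot_iff.mpr fun c hc => (Submodule.mem_bot K).mpr ?_
  obtain ⟨hcW, hcp⟩ := Submodule.mem_inf.mp hc
  exact eq_zero_of_mem_of_finrank_eq_one hp1 (B u) hw huw hcp (hiso u (hVm hu) c hcW)

theorem le_sup_of_forall_map_le_of_inf_eq_bot [CharZero K] (htop : Vm ⊔ V0 ⊔ Vp = ⊤)
    (hφm : ∀ (t : Kˣ) (v : V), v ∈ Vm → φ t v = (t : K) • v)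
    (hφ0 : ∀ (t : Kˣ) (v : V), v ∈ V0 → φ t v = v)
    (hφp : ∀ (t : Kˣ) (v : V), v ∈ Vp → φ t v = ((t : K)⁻¹) • v)
    {W : Submodule K V} (hinv : ∀ t : Kˣ, W.map (φ t) ≤ W) (hWp : W ⊓ Vp = ⊥) :
    W ≤ Vm ⊔ V0 := by
  intro w hw
  have hw' : w ∈ Vm ⊔ V0 ⊔ Vp := htop ▸ Submodule.mem_top
  obtain ⟨x, hx, c, hc, rfl⟩ := Submodule.mem_sup.mp hw'
  obtain ⟨a, ha, b, hb, rfl⟩ := Submodule.mem_sup.mp hx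
  have hcW : c ∈ W := mem_of_forall_units_smul_add_add_inv_smul_mem fun t => by
    have := hinv t (Submodule.mem_map_of_mem hw)
    rwa [map_add, map_add, hφm t a ha, hφ0 t b hb, hφp t c hc] at this
  have hc0 : c = 0 := (Submodule.mem_bot K).mp (hWp ▸ Submodule.mem_inf.mpr ⟨hcW, hc⟩)
  rwa [hc0, add_zero]

theorem map_sup_le_self_of_le (hφm : ∀ (t : Kˣ) (v : V), v ∈ Vm → φ t v = (t : K) • v)
    (hφ0 : ∀ (t : Kˣ) (v : V), v ∈ V0 → φ t v = v) {W0 : Submodule K V} (hW0 : W0 ≤ V0)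
    (t : Kˣ) : (Vm ⊔ W0).map (φ t) ≤ Vm ⊔ W0 := by
  rw [Submodule.map_sup]
  refine sup_le_sup (Submodule.map_le_iff_le_comap.mpr fun v hv => ?_)
    (Submodule.map_le_iff_le_comap.mpr fun v hv => ?_)
  · rw [Submodule.mem_comap, hφm t v hv]
    exact Vm.smul_mem _ hv
  · rwa [Submodule.mem_comap, hφ0 t v (hW0 hv)]

end

theorem stmt_8_general {V : Type*} [AddCommGroup V] [Module ℂ V] [FiniteDimensional ℂ V]
    (B : V →ₗ[ℂ] V →ₗ[ℂ] ℂ)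
    (Vm V0 Vp : Submodule ℂ V)
    (hV : DirectSum.IsInternal ![Vm, V0, Vp])
    (hm1 : Module.finrank ℂ Vm = 1) (hp1 : Module.finrank ℂ Vp = 1)
    (hmiso : ∀ u ∈ Vm, ∀ u' ∈ Vm, B u u' = 0)
    (hvan : ∀ u ∈ Vm ⊔ Vp, ∀ w ∈ V0, B u w = 0 ∧ B w u = 0)
    (hnz : ∃ u ∈ Vm, ∃ w ∈ Vp, B u w ≠ 0)
    (φ : ℂˣ → V →ₗ[ℂ] V)
    (hφm : ∀ (t : ℂˣ) (v : V), v ∈ Vm → φ t v = (t : ℂ) • v)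
    (hφ0 : ∀ (t : ℂˣ) (v : V), v ∈ V0 → φ t v = v)
    (hφp : ∀ (t : ℂˣ) (v : V), v ∈ Vp → φ t v = ((t : ℂ)⁻¹) • v)
    (k : ℕ) (hk : 1 ≤ k) :
    Set.BijOn (fun W : Submodule ℂ V => W ⊓ V0)
      {W : Submodule ℂ V | (∀ t : ℂˣ, W.map (φ t) ≤ W) ∧
        (∀ u ∈ W, ∀ u' ∈ W, B u u' = 0) ∧ Module.finrank ℂ W = k ∧ Vm ≤ W}
      {W0 : Submodule ℂ V | W0 ≤ V0 ∧ (∀ u ∈ W0, ∀ u' ∈ W0, B u u' = 0) ∧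
        Module.finrank ℂ W0 = k - 1} ∧
    Set.InvOn (fun W0 : Submodule ℂ V => Vm ⊔ W0)
      (fun W : Submodule ℂ V => W ⊓ V0)
      {W : Submodule ℂ V | (∀ t : ℂˣ, W.map (φ t) ≤ W) ∧
        (∀ u ∈ W, ∀ u' ∈ W, B u u' = 0) ∧ Module.finrank ℂ W = k ∧ Vm ≤ W}
      {W0 : Submodule ℂ V | W0 ≤ V0 ∧ (∀ u ∈ W0, ∀ u' ∈ W0, B u u' = 0) ∧
        Module.finrank ℂ W0 = k - 1} := by
  have htop : Vm ⊔ V0 ⊔ Vp = ⊤ := by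
    simpa [iSup, Matrix.range_cons, Matrix.range_empty, sSup_insert, sup_comm, sup_left_comm]
      using hV.submodule_iSup_eq_top
  have hdisj : Disjoint Vm V0 :=
    hV.submodule_iSupIndep.pairwiseDisjoint (i := 0) (j := 1) (by decide)
  have hsink (W : Submodule ℂ V) (hinv : ∀ t : ℂˣ, W.map (φ t) ≤ W)
      (hiso : IsTotallyIsotropic B W) (hVm : Vm ≤ W) : Vm ⊔ W ⊓ V0 = W := by
    have hW : W ≤ Vm ⊔ V0 := le_sup_of_forall_map_le_of_inf_eq_bot φ htop hφm hφ0 hφp hinv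
      (inf_eq_bot_of_isTotallyIsotropic B hp1 hnz hiso hVm)
    rw [inf_comm, ← sup_inf_assoc_of_le V0 hVm, inf_eq_right.mpr hW]
  have hsource (W0 : Submodule ℂ V) (hW0 : W0 ≤ V0) : (Vm ⊔ W0) ⊓ V0 = W0 := by
    rw [sup_comm, sup_inf_assoc_of_le Vm hW0, hdisj.eq_bot, sup_bot_eq]
  have hrank (W0 : Submodule ℂ V) (hW0 : W0 ≤ V0) :
      Module.finrank ℂ ↥(Vm ⊔ W0) = Module.finrank ℂ W0 + 1 := by
    rw [Submodule.finrank_sup_eq_of_disjoint (hdisj.mono_right hW0), hm1, add_comm]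
  refine ⟨Set.InvOn.bijOn ?invOn ?_ ?_, ?invOn⟩
  case invOn =>
    exact ⟨fun W ⟨hinv, hiso, _, hVm⟩ => hsink W hinv hiso hVm,
      fun W0 ⟨hW0, _, _⟩ => hsource W0 hW0⟩
  · rintro W ⟨hinv, hiso, rfl, hVm⟩
    refine ⟨inf_le_right, IsTotallyIsotropic.mono hiso inf_le_left, ?_⟩
    have h := hrank _ (inf_le_right : W ⊓ V0 ≤ V0)
    rw [hsink W hinv hiso hVm] at h
    exact Nat.eq_sub_of_add_eq h.symm
  · rintro W0 ⟨hW0, hiso, hrk⟩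
    refine ⟨map_sup_le_self_of_le φ hφm hφ0 hW0, isTotallyIsotropic_sup hmiso hiso
      fun p hp q hq => hvan p (Submodule.mem_sup_left hp) q (hW0 hq), ?_, le_sup_left⟩
    rw [hrank W0 hW0, hrk]
    omega

/-- In the setting of the weight decomposition `V = V₋ ⊕ V₀ ⊕ V₊` with
one-dimensional isotropic extremal weight spaces and the `ℂ*`-action `φ` (as `t` on `V₋`,
identity on `V₀`, `t⁻¹` on `V₊`), for every integer `k ≥ 1` the map `W ↦ W ∩ V₀` is a
bijection from the set of invariant totally isotropic subspaces `W ⊆ V` with `dim W = k` and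
`V₋ ⊆ W` onto the set of totally isotropic subspaces of `V₀` of dimension `k - 1`; its
inverse is `W₀ ↦ V₋ ⊕ W₀`. -/
theorem stmt_8 {V : Type*} [AddCommGroup V] [Module ℂ V] [FiniteDimensional ℂ V]
    (B : V →ₗ[ℂ] V →ₗ[ℂ] ℂ)
    (hB : ∀ v : V, (∀ w : V, B v w = 0) → v = 0)
    (hBsymm : ∀ x y : V, B x y = B y x)
    (Vm V0 Vp : Submodule ℂ V)
    (hV : DirectSum.IsInternal ![Vm, V0, Vp])
    (hm1 : Module.finrank ℂ Vm = 1) (hp1 : Module.finrank ℂ Vp = 1)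
    (hmiso : ∀ u ∈ Vm, ∀ u' ∈ Vm, B u u' = 0)
    (hpiso : ∀ u ∈ Vp, ∀ u' ∈ Vp, B u u' = 0)
    (hvan : ∀ u ∈ Vm ⊔ Vp, ∀ w ∈ V0, B u w = 0 ∧ B w u = 0)
    (hnz : ∃ u ∈ Vm, ∃ w ∈ Vp, B u w ≠ 0)
    (φ : ℂˣ → V →ₗ[ℂ] V)
    (hφm : ∀ (t : ℂˣ) (v : V), v ∈ Vm → φ t v = (t : ℂ) • v)
    (hφ0 : ∀ (t : ℂˣ) (v : V), v ∈ V0 → φ t v = v)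
    (hφp : ∀ (t : ℂˣ) (v : V), v ∈ Vp → φ t v = ((t : ℂ)⁻¹) • v)
    (k : ℕ) (hk : 1 ≤ k) :
    Set.BijOn (fun W : Submodule ℂ V => W ⊓ V0)
      {W : Submodule ℂ V | (∀ t : ℂˣ, W.map (φ t) ≤ W) ∧
        (∀ u ∈ W, ∀ u' ∈ W, B u u' = 0) ∧ Module.finrank ℂ W = k ∧ Vm ≤ W}
      {W0 : Submodule ℂ V | W0 ≤ V0 ∧ (∀ u ∈ W0, ∀ u' ∈ W0, B u u' = 0) ∧
        Module.finrank ℂ W0 = k - 1} ∧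
    Set.InvOn (fun W0 : Submodule ℂ V => Vm ⊔ W0)
      (fun W : Submodule ℂ V => W ⊓ V0)
      {W : Submodule ℂ V | (∀ t : ℂˣ, W.map (φ t) ≤ W) ∧
        (∀ u ∈ W, ∀ u' ∈ W, B u u' = 0) ∧ Module.finrank ℂ W = k ∧ Vm ≤ W}
      {W0 : Submodule ℂ V | W0 ≤ V0 ∧ (∀ u ∈ W0, ∀ u' ∈ W0, B u u' = 0) ∧
        Module.finrank ℂ W0 = k - 1} :=
  stmt_8_general B Vm V0 Vp hV hm1 hp1 hmiso hvan hnz φ hφm hφ0 hφp k hk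
end

section
/- Let r : ℤ^{n+1} → ℤ^{n+1} be the coordinate-reversal map, r(v)_j = v_{n+2−j} (which realizes the longest element of the Weyl group of type A_n on the root lattice). Then: (a) r maps Φ(A_n) to itself and maps every positive root e_a − e_b (a < b) to a negative root; and (b) for each 1 ≤ i ≤ n, the identity σ_i(r(β)) = −σ_i(β) holds for all roots β ∈ Φ(A_n) if and only if n + 1 = 2i. (This is the classification of balanced short gradings in type A: σ_i is balanced exactly for the middle node of A_{2i−1}.) -/
/-- The root system of type `A_n`, realized in `ℤ^{n+1}` as `{ e_a - e_b : a ≠ b }`. -/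
def PhiA (n : ℕ) : Set (Fin (n + 1) → ℤ) :=
  {v | ∃ a b : Fin (n + 1), a ≠ b ∧ v = Pi.single a 1 - Pi.single b 1}

/-- The height map `σ_i(v) = v_1 + ⋯ + v_i` (coordinates `0`-indexed). -/
def heightMap {m : ℕ} (i : ℕ) (v : Fin m → ℤ) : ℤ :=
  ∑ j ∈ Finset.univ.filter (fun j : Fin m => (j : ℕ) < i), v j

/-- The coordinate-reversal map `r(v)_j = v_{n+2-j}` (in `0`-indexed coordinates,
`r(v)_j = v_{n-j}`), realizing the longest Weyl group element of type `A_n` on the root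
lattice. -/
def revA (n : ℕ) (v : Fin (n + 1) → ℤ) : Fin (n + 1) → ℤ := fun j => v j.rev


lemma revA_single (n : ℕ) (a : Fin (n+1)) :
    revA n (Pi.single a 1) = Pi.single a.rev (1:ℤ) := by
  funext j
  simp only [revA, Pi.single_apply]
  rcases eq_or_ne j a.rev with hc | hc
  · subst hc; simp [Fin.rev_rev]
  · rw [if_neg hc, if_neg (fun h => hc (by rw [← h, Fin.rev_rev]))]

lemma revA_sub (n : ℕ) (u v : Fin (n+1) → ℤ) :
    revA n (u - v) = revA n u - revA n v := rfl

lemma heightMap_sub {m : ℕ} (i : ℕ) (u v : Fin m → ℤ) :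
    heightMap i (u - v) = heightMap i u - heightMap i v := by
  simp [heightMap, Finset.sum_sub_distrib]

lemma heightMap_single {m : ℕ} (i : ℕ) (a : Fin m) :
    heightMap i (Pi.single a (1:ℤ)) = if (a:ℕ) < i then 1 else 0 := by
  classical
  simp only [heightMap, Pi.single_apply]
  rw [Finset.sum_ite_eq' ]
  simp

lemma val_rev' {n : ℕ} (a : Fin (n+1)) : (a.rev : ℕ) = n - a := by
  simp [Fin.val_rev]

/-- (a) The reversal map `r` maps `Φ(A_n)` to itself and maps every
positive root `e_a - e_b` (`a < b`) to a negative root; (b) for each `1 ≤ i ≤ n`, the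
identity `σ_i(r(β)) = -σ_i(β)` holds for all roots `β ∈ Φ(A_n)` if and only if
`n + 1 = 2i`. -/
theorem stmt_13 (n : ℕ) (hn : 1 ≤ n) :
    (∀ β ∈ PhiA n, revA n β ∈ PhiA n) ∧
    (∀ a b : Fin (n + 1), a < b → ∃ c d : Fin (n + 1), c < d ∧
      revA n (Pi.single a 1 - Pi.single b 1) = Pi.single d 1 - Pi.single c 1) ∧
    (∀ i : ℕ, 1 ≤ i → i ≤ n →
      ((∀ β ∈ PhiA n, heightMap i (revA n β) = -heightMap i β) ↔ n + 1 = 2 * i)) := by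
  refine ⟨?_, ?_, ?_⟩
  · rintro β ⟨a, b, hab, rfl⟩
    exact ⟨a.rev, b.rev, fun h => hab (Fin.rev_injective h),
      by rw [revA_sub, revA_single, revA_single]⟩
  · intro a b hab
    refine ⟨b.rev, a.rev, Fin.rev_lt_rev.mpr hab, ?_⟩
    rw [revA_sub, revA_single, revA_single]
  · intro i hi1 hin
    constructor
    · intro H
      by_contra hne
      rcases Nat.lt_or_ge (2 * i) (n + 1) with hlt | hge
      · -- take β = e_0 - e_i
        have h0i : (0 : Fin (n+1)) ≠ ⟨i, by omega⟩ := by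
          intro h; exact absurd (congrArg Fin.val h) (by simp; omega)
        have := H _ ⟨0, ⟨i, by omega⟩, h0i, rfl⟩
        rw [revA_sub, revA_single, revA_single, heightMap_sub, heightMap_sub,
          heightMap_single, heightMap_single, heightMap_single, heightMap_single] at this
        simp only [val_rev', Fin.val_zero, Fin.val_mk, Nat.sub_zero] at this
        split_ifs at this <;> omega
      · have h2i : 2 ≤ i := by omega
        have h0i : (0 : Fin (n+1)) ≠ ⟨i - 1, by omega⟩ := by
          intro h; exact absurd (congrArg Fin.val h) (by simp; omega)
        have := H _ ⟨0, ⟨i - 1, by omega⟩, h0i, rfl⟩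
        rw [revA_sub, revA_single, revA_single, heightMap_sub, heightMap_sub,
          heightMap_single, heightMap_single, heightMap_single, heightMap_single] at this
        simp only [val_rev', Fin.val_zero, Fin.val_mk, Nat.sub_zero] at this
        split_ifs at this <;> omega
    · rintro heq β ⟨a, b, hab, rfl⟩
      rw [revA_sub, revA_single, revA_single, heightMap_sub, heightMap_sub,
        heightMap_single, heightMap_single, heightMap_single, heightMap_single,
        val_rev', val_rev']
      have ha := a.isLt
      have hb := b.isLt
      split_ifs <;> omega
end
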